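/- The largest eigenvalue μ of the Laplacian matrix of the graph G strictly exceeds max over all pairs of adjacent vertices v ~ j of d_v + d_j + m_v + m_j − 4·d_v·d_j/(m_v + m_j). (This gives a counterexample to conjectured bound 63 of Brankov, Hansen and Stevanović.) -/

import Mathlib

/-- The edge list of the graph. -/
def edgeList : List (Fin 12 × Fin 12) :=
  [(0,3),(0,4),(0,8),(1,2),(1,3),(1,8),(1,10),(2,5),(2,7),(2,11),(3,7),(3,11),(4,6),(4,7),(5,8),(5,9),(6,9),(6,10),(7,10),(9,11),(10,11)]

/-- The graph under consideration. -/
def G : SimpleGraph (Fin 12) where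
  Adj v w := (v, w) ∈ edgeList ∨ (w, v) ∈ edgeList
  symm := ⟨fun _ _ h => h.symm⟩
  loopless := ⟨by intro v; fin_cases v <;> decide⟩

instance : DecidableRel G.Adj :=
  fun v w => inferInstanceAs (Decidable ((v, w) ∈ edgeList ∨ (w, v) ∈ edgeList))

/-- `d v` is the degree of the vertex `v`, as a real number. -/
noncomputable def d (v : Fin 12) : ℝ := G.degree v

/-- `m v` is the average of the degrees of the neighbours of `v`. -/
noncomputable def m (v : Fin 12) : ℝ :=
  (∑ u ∈ G.neighborFinset v, (G.degree u : ℝ)) / d v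

def Lint : Matrix (Fin 12) (Fin 12) ℤ :=
  !![3,0,0,-1,-1,0,0,0,-1,0,0,0;
    0,4,-1,-1,0,0,0,0,-1,0,-1,0;
    0,-1,4,0,0,-1,0,-1,0,0,0,-1;
    -1,-1,0,4,0,0,0,-1,0,0,0,-1;
    -1,0,0,0,3,0,-1,-1,0,0,0,0;
    0,0,-1,0,0,3,0,0,-1,-1,0,0;
    0,0,0,0,-1,0,3,0,0,-1,-1,0;
    0,0,-1,-1,-1,0,0,4,0,0,-1,0;
    -1,-1,0,0,0,-1,0,0,3,0,0,0;
    0,0,0,0,0,-1,-1,0,0,3,0,-1;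
    0,-1,0,0,0,0,-1,-1,0,0,4,-1;
    0,0,-1,-1,0,0,0,0,0,-1,-1,4]

def M2 : Matrix (Fin 12) (Fin 12) ℤ :=
  !![12,2,0,-7,-6,1,1,2,-6,0,0,1;
    2,20,-8,-8,0,2,1,3,-7,0,-8,3;
    0,-8,20,3,1,-7,0,-8,2,2,3,-8;
    -7,-8,3,20,2,0,0,-8,2,1,3,-8;
    -6,0,1,2,12,0,-6,-7,1,1,2,0;
    1,2,-7,0,0,12,1,1,-6,-6,0,2;
    1,1,0,0,-6,1,12,2,0,-6,-7,2;
    2,3,-8,-8,-7,1,2,20,0,0,-8,3;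
    -6,-7,2,2,1,-6,0,0,12,1,1,0;
    0,0,2,1,1,-6,-6,0,1,12,2,-7;
    0,-8,3,3,2,0,-7,-8,1,2,20,-8;
    1,3,-8,-8,0,2,2,3,0,-7,-8,20]

def M3 : Matrix (Fin 12) (Fin 12) ℤ :=
  !![55,21,-6,-45,-33,9,9,21,-33,-3,-6,11;
    21,111,-60,-60,-6,21,11,36,-45,-6,-59,36;
    -6,-60,111,36,11,-45,-6,-59,21,21,36,-60;
    -45,-60,36,111,21,-6,-6,-60,21,11,36,-59;
    -33,-6,11,21,55,-3,-33,-45,9,9,21,-6;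
    9,21,-45,-6,-3,55,9,11,-33,-33,-6,21;
    9,11,-6,-6,-33,9,55,21,-3,-33,-45,21;
    21,36,-59,-60,-45,11,21,111,-6,-6,-60,36;
    -33,-45,21,21,9,-33,-3,-6,55,9,11,-6;
    -3,-6,21,11,9,-33,-33,-6,9,55,21,-45;
    -6,-59,36,36,21,-6,-45,-60,11,21,111,-60;
    11,36,-60,-59,-6,21,21,36,-6,-45,-60,111]

def M4 : Matrix (Fin 12) (Fin 12) ℤ :=
  !![276,174,-86,-288,-184,69,69,174,-184,-38,-86,104;
    174,668,-444,-444,-86,174,104,329,-288,-86,-430,329;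
    -86,-444,668,329,104,-288,-86,-430,174,174,329,-444;
    -288,-444,329,668,174,-86,-86,-444,174,104,329,-430;
    -184,-86,104,174,276,-38,-184,-288,69,69,174,-86;
    69,174,-288,-86,-38,276,69,104,-184,-184,-86,174;
    69,104,-86,-86,-184,69,276,174,-38,-184,-288,174;
    174,329,-430,-444,-288,104,174,668,-86,-86,-444,329;
    -184,-288,174,174,69,-184,-38,-86,276,69,104,-86;
    -38,-86,174,104,69,-184,-184,-86,69,276,174,-288;
    -86,-430,329,329,174,-86,-288,-444,104,174,668,-444;
    104,329,-444,-430,-86,174,174,329,-86,-288,-444,668]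

def M8 : Matrix (Fin 12) (Fin 12) ℤ :=
  !![323958,550020,-486052,-607544,-280244,214089,214089,550020,-280244,-191520,-486052,479480;
    550020,1410982,-1316316,-1316316,-486052,550020,479480,1250161,-607544,-486052,-1278544,1250161;
    -486052,-1316316,1410982,1250161,479480,-607544,-486052,-1278544,550020,550020,1250161,-1316316;
    -607544,-1316316,1250161,1410982,550020,-486052,-486052,-1316316,550020,479480,1250161,-1278544;
    -280244,-486052,479480,550020,323958,-191520,-280244,-607544,214089,214089,550020,-486052;
    214089,550020,-607544,-486052,-191520,323958,214089,479480,-280244,-280244,-486052,550020;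
    214089,479480,-486052,-486052,-280244,214089,323958,550020,-191520,-280244,-607544,550020;
    550020,1250161,-1278544,-1316316,-607544,479480,550020,1410982,-486052,-486052,-1316316,1250161;
    -280244,-607544,550020,550020,214089,-280244,-191520,-486052,323958,214089,479480,-486052;
    -191520,-486052,550020,479480,214089,-280244,-280244,-486052,214089,323958,550020,-607544;
    -486052,-1278544,1250161,1250161,550020,-486052,-607544,-1316316,479480,550020,1410982,-1316316;
    479480,1250161,-1316316,-1278544,-486052,550020,550020,1250161,-486052,-607544,-1316316,1410982]

lemma hLint : G.lapMatrix ℤ = Lint := by decide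

lemma h2 : Lint * Lint = M2 := by decide
lemma h3 : M2 * Lint = M3 := by decide
lemma h4 : M2 * M2 = M4 := by decide
lemma h8 : M4 * M4 = M8 := by decide
lemma t11 : (M8 * M3).trace = 3863154084 := by decide
lemma t12 : (M8 * M4).trace = 28277170056 := by decide

lemma e2 : Lint ^ 2 = M2 := by rw [sq, h2]
lemma e3 : Lint ^ 3 = M3 := by rw [pow_succ, e2, h3]
lemma e4 : Lint ^ 4 = M4 := by rw [show (4:ℕ) = 2*2 from rfl, pow_mul, e2, sq, h4]
lemma e8 : Lint ^ 8 = M8 := by rw [show (8:ℕ) = 4*2 from rfl, pow_mul, e4, sq, h8]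
lemma e11 : Lint ^ 11 = M8 * M3 := by rw [show (11:ℕ) = 8+3 from rfl, pow_add, e8, e3]
lemma h34 : M3 * Lint = M4 := by decide
lemma e12 : Lint ^ 12 = M8 * M4 := by
  show Lint ^ (11+1) = M8 * M4
  rw [pow_succ, e11, Matrix.mul_assoc, h34]

lemma hmapL : (G.lapMatrix ℤ).map (Int.cast : ℤ → ℝ) = G.lapMatrix ℝ := by
  ext i j
  simp [SimpleGraph.lapMatrix, SimpleGraph.degMatrix, Matrix.diagonal, Matrix.map_apply,
    SimpleGraph.adjMatrix, apply_ite (Int.cast : ℤ → ℝ)]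

lemma trace_pow_real (k : ℕ) :
    ((G.lapMatrix ℝ) ^ k).trace = (((G.lapMatrix ℤ) ^ k).trace : ℝ) := by
  have h : (G.lapMatrix ℝ) ^ k = ((G.lapMatrix ℤ) ^ k).map (Int.cast : ℤ → ℝ) := by
    rw [← hmapL]
    rw [show ((G.lapMatrix ℤ).map (Int.cast : ℤ → ℝ)) =
      (Int.castRingHom ℝ).mapMatrix (G.lapMatrix ℤ) from rfl,
      show (((G.lapMatrix ℤ) ^ k).map (Int.cast : ℤ → ℝ)) =
      (Int.castRingHom ℝ).mapMatrix ((G.lapMatrix ℤ) ^ k) from rfl, map_pow]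
  rw [h, Matrix.trace, Matrix.trace]
  simp [Matrix.diag, Matrix.map_apply]

/-- trace of a power of a real symmetric matrix is the sum of powers of eigenvalues -/
lemma trace_pow_eq_sum_eigenvalues {n : Type*} [Fintype n] [DecidableEq n]
    {A : Matrix n n ℝ} (hA : A.IsHermitian) (k : ℕ) :
    (A ^ k).trace = ∑ i, hA.eigenvalues i ^ k := by
  have hsp := hA.spectral_theorem
  set u : Matrix n n ℝ := (hA.eigenvectorUnitary : Matrix n n ℝ) with hu
  have hsu : star u * u = 1 := hA.eigenvectorUnitary.2.1
  have hus : u * star u = 1 := hA.eigenvectorUnitary.2.2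
  have key : A ^ k = u * (Matrix.diagonal (RCLike.ofReal ∘ hA.eigenvalues)) ^ k * star u := by
    induction k with
    | zero => simp [hus]
    | succ k ih =>
      rw [pow_succ, ih, pow_succ]
      calc u * Matrix.diagonal (RCLike.ofReal ∘ hA.eigenvalues) ^ k * star u * A
          = u * Matrix.diagonal (RCLike.ofReal ∘ hA.eigenvalues) ^ k * star u *
            (u * Matrix.diagonal (RCLike.ofReal ∘ hA.eigenvalues) * star u) := by congr 1
        _ = u * Matrix.diagonal (RCLike.ofReal ∘ hA.eigenvalues) ^ k * (star u * u) *
            Matrix.diagonal (RCLike.ofReal ∘ hA.eigenvalues) * star u := by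
            simp only [Matrix.mul_assoc]
        _ = u * (Matrix.diagonal (RCLike.ofReal ∘ hA.eigenvalues) ^ k *
            Matrix.diagonal (RCLike.ofReal ∘ hA.eigenvalues)) * star u := by
            rw [hsu]; simp only [Matrix.mul_assoc, Matrix.one_mul]
  rw [key, Matrix.trace_mul_cycle, hsu, Matrix.one_mul,
    Matrix.diagonal_pow, Matrix.trace_diagonal]
  simp


lemma d0 : d 0 = 3 := by
  rw [d, show G.degree 0 = 3 from by decide]; norm_num

lemma d1 : d 1 = 4 := by
  rw [d, show G.degree 1 = 4 from by decide]; norm_num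

lemma d2 : d 2 = 4 := by
  rw [d, show G.degree 2 = 4 from by decide]; norm_num

lemma d3 : d 3 = 4 := by
  rw [d, show G.degree 3 = 4 from by decide]; norm_num

lemma d4 : d 4 = 3 := by
  rw [d, show G.degree 4 = 3 from by decide]; norm_num

lemma d5 : d 5 = 3 := by
  rw [d, show G.degree 5 = 3 from by decide]; norm_num

lemma d6 : d 6 = 3 := by
  rw [d, show G.degree 6 = 3 from by decide]; norm_num

lemma d7 : d 7 = 4 := by
  rw [d, show G.degree 7 = 4 from by decide]; norm_num

lemma d8 : d 8 = 3 := by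
  rw [d, show G.degree 8 = 3 from by decide]; norm_num

lemma d9 : d 9 = 3 := by
  rw [d, show G.degree 9 = 3 from by decide]; norm_num

lemma d10 : d 10 = 4 := by
  rw [d, show G.degree 10 = 4 from by decide]; norm_num

lemma d11 : d 11 = 4 := by
  rw [d, show G.degree 11 = 4 from by decide]; norm_num

lemma m0 : m 0 = 10/3 := by
  rw [m, d0, ← Nat.cast_sum,
    show (∑ u ∈ G.neighborFinset 0, G.degree u) = 10 from by decide]
  norm_num

lemma m1 : m 1 = 15/4 := by
  rw [m, d1, ← Nat.cast_sum,
    show (∑ u ∈ G.neighborFinset 1, G.degree u) = 15 from by decide]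
  norm_num

lemma m2 : m 2 = 15/4 := by
  rw [m, d2, ← Nat.cast_sum,
    show (∑ u ∈ G.neighborFinset 2, G.degree u) = 15 from by decide]
  norm_num

lemma m3 : m 3 = 15/4 := by
  rw [m, d3, ← Nat.cast_sum,
    show (∑ u ∈ G.neighborFinset 3, G.degree u) = 15 from by decide]
  norm_num

lemma m4 : m 4 = 10/3 := by
  rw [m, d4, ← Nat.cast_sum,
    show (∑ u ∈ G.neighborFinset 4, G.degree u) = 10 from by decide]
  norm_num

lemma m5 : m 5 = 10/3 := by
  rw [m, d5, ← Nat.cast_sum,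
    show (∑ u ∈ G.neighborFinset 5, G.degree u) = 10 from by decide]
  norm_num

lemma m6 : m 6 = 10/3 := by
  rw [m, d6, ← Nat.cast_sum,
    show (∑ u ∈ G.neighborFinset 6, G.degree u) = 10 from by decide]
  norm_num

lemma m7 : m 7 = 15/4 := by
  rw [m, d7, ← Nat.cast_sum,
    show (∑ u ∈ G.neighborFinset 7, G.degree u) = 15 from by decide]
  norm_num

lemma m8 : m 8 = 10/3 := by
  rw [m, d8, ← Nat.cast_sum,
    show (∑ u ∈ G.neighborFinset 8, G.degree u) = 10 from by decide]
  norm_num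

lemma m9 : m 9 = 10/3 := by
  rw [m, d9, ← Nat.cast_sum,
    show (∑ u ∈ G.neighborFinset 9, G.degree u) = 10 from by decide]
  norm_num

lemma m10 : m 10 = 15/4 := by
  rw [m, d10, ← Nat.cast_sum,
    show (∑ u ∈ G.neighborFinset 10, G.degree u) = 15 from by decide]
  norm_num

lemma m11 : m 11 = 15/4 := by
  rw [m, d11, ← Nat.cast_sum,
    show (∑ u ∈ G.neighborFinset 11, G.degree u) = 15 from by decide]
  norm_num

lemma fk0 : (⟨0, by norm_num⟩ : Fin 12) = 0 := rfl
lemma fk1 : (⟨1, by norm_num⟩ : Fin 12) = 1 := rfl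
lemma fk2 : (⟨2, by norm_num⟩ : Fin 12) = 2 := rfl
lemma fk3 : (⟨3, by norm_num⟩ : Fin 12) = 3 := rfl
lemma fk4 : (⟨4, by norm_num⟩ : Fin 12) = 4 := rfl
lemma fk5 : (⟨5, by norm_num⟩ : Fin 12) = 5 := rfl
lemma fk6 : (⟨6, by norm_num⟩ : Fin 12) = 6 := rfl
lemma fk7 : (⟨7, by norm_num⟩ : Fin 12) = 7 := rfl
lemma fk8 : (⟨8, by norm_num⟩ : Fin 12) = 8 := rfl
lemma fk9 : (⟨9, by norm_num⟩ : Fin 12) = 9 := rfl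
lemma fk10 : (⟨10, by norm_num⟩ : Fin 12) = 10 := rfl
lemma fk11 : (⟨11, by norm_num⟩ : Fin 12) = 11 := rfl

theorem laplacian_spectral_radius_exceeds_bound (μ : ℝ)
    (hmem : μ ∈ spectrum ℝ (G.lapMatrix ℝ))
    (hmax : ∀ ν ∈ spectrum ℝ (G.lapMatrix ℝ), ν ≤ μ) :
    (Finset.univ.filter fun p : _ × _ => G.Adj p.1 p.2).sup' (by decide)
      (fun p => d p.1 + d p.2 + m p.1 + m p.2 - 4 * d p.1 * d p.2 / (m p.1 + m p.2)) < μ := by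
  have hP := SimpleGraph.posSemidef_lapMatrix ℝ G
  have hA : (G.lapMatrix ℝ).IsHermitian := hP.1
  have hnn : ∀ i, 0 ≤ hA.eigenvalues i := fun i => hP.eigenvalues_nonneg i
  have hle : ∀ i, hA.eigenvalues i ≤ μ :=
    fun i => hmax _ (hA.eigenvalues_mem_spectrum_real i)
  have s11 : ∑ i, hA.eigenvalues i ^ 11 = 3863154084 := by
    rw [← trace_pow_eq_sum_eigenvalues hA, trace_pow_real, hLint, e11, t11]; norm_num
  have s12 : ∑ i, hA.eigenvalues i ^ 12 = 28277170056 := by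
    rw [← trace_pow_eq_sum_eigenvalues hA, trace_pow_real, hLint, e12, t12]; norm_num
  have hsum : (28277170056 : ℝ) ≤ μ * 3863154084 := by
    rw [← s11, ← s12, Finset.mul_sum]
    refine Finset.sum_le_sum fun i _ => ?_
    calc hA.eigenvalues i ^ 12 = hA.eigenvalues i * hA.eigenvalues i ^ 11 := by ring
      _ ≤ μ * hA.eigenvalues i ^ 11 :=
        mul_le_mul_of_nonneg_right (hle i) (pow_nonneg (hnn i) 11)
  have hc : (7453 : ℝ)/1020 < μ := by
    nlinarith [hsum]
  rw [Finset.sup'_lt_iff]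
  intro p hp
  refine lt_of_le_of_lt ?_ hc
  fin_cases hp <;>
    norm_num [fk0, fk1, fk2, fk3, fk4, fk5, fk6, fk7, fk8, fk9, fk10, fk11,
      d0, d1, d2, d3, d4, d5, d6, d7, d8, d9, d10, d11,
      m0, m1, m2, m3, m4, m5, m6, m7, m8, m9, m10, m11]
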